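/- (Corollary 1, with the paper's O(1/K²)·f(x*) term made explicit: the 1/e approximation guarantee of the non-monotone Frank-Wolfe variant) Let P ⊆ X be a nonempty compact down-closed convex set with diameter at most D; let f : ℝⁿ → ℝ be nonnegative on X, DR-submodular on X, and differentiable on X with L-Lipschitz gradient; let x* be a maximizer of f over P. For an integer K ≥ 2, run the non-monotone Frank-Wolfe variant with uniform step size γ = 1/K. Then the output satisfies f(x⁽ᴷ⁾) ≥ e^{−1}·f(x*) − (L·D²/2 + f(x*))/K. -/

import Mathlib

open scoped RealInnerProductSpace
open Filter Topology Set

noncomputable section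

/-- `ℝⁿ` with the Euclidean norm. -/
abbrev E (n : ℕ) := EuclideanSpace ℝ (Fin n)

/-- membership in the box `X = {x : 0 ≤ x ≤ ub}` (componentwise). -/
def inBox {n : ℕ} (ub x : E n) : Prop := ∀ i, 0 ≤ x i ∧ x i ≤ ub i

/-- DR-submodularity on the box `[0, ub]`. -/
def DRSubmodular {n : ℕ} (ub : E n) (f : E n → ℝ) : Prop :=
  ∀ a b : E n, inBox ub a → inBox ub b → (∀ i, a i ≤ b i) →
    ∀ (i : Fin n) (k : ℝ), 0 ≤ k →
      inBox ub (a + k • EuclideanSpace.single i 1) →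
      inBox ub (b + k • EuclideanSpace.single i 1) →
      f (a + k • EuclideanSpace.single i 1) - f a ≥
        f (b + k • EuclideanSpace.single i 1) - f b

/-- a set is down-closed. -/
def DownClosed {n : ℕ} (P : Set (E n)) : Prop :=
  ∀ x ∈ P, ∀ y : E n, (∀ i, 0 ≤ y i) → (∀ i, y i ≤ x i) → y ∈ P

section helpers
variable {n : ℕ} {ub : E n} {f : E n → ℝ} {L : ℝ}

lemma abs_apply_le {n : ℕ} (x : E n) (i : Fin n) : |x i| ≤ ‖x‖ := by
  have h2 := abs_real_inner_le_norm x (EuclideanSpace.single i (1:ℝ))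
  rw [EuclideanSpace.inner_single_right, EuclideanSpace.norm_single] at h2
  simpa using h2

lemma hd_line {n : ℕ} {f : E n → ℝ} (w d : E n) (t : ℝ)
    (h : DifferentiableAt ℝ f (w + t • d)) :
    HasDerivAt (fun s : ℝ => f (w + s • d)) ⟪gradient f (w + t • d), d⟫ t := by
  have h1 : HasDerivAt (fun s : ℝ => w + s • d) d t := by
    simpa using ((hasDerivAt_id t).smul_const d).const_add w
  have h2 := h.hasGradientAt.hasFDerivAt.comp_hasDerivAt t h1
  rw [InnerProductSpace.toDual_apply_apply] at h2
  exact h2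

-- derivative comparison from eventual inequality of increments on the right
lemma deriv_le_of_incr {g h : ℝ → ℝ} {Dg Dh : ℝ} (hg : HasDerivAt g Dg 0)
    (hh : HasDerivAt h Dh 0) (ε : ℝ) (hε : 0 < ε)
    (hle : ∀ k, 0 < k → k < ε → h k - h 0 ≤ g k - g 0) : Dh ≤ Dg := by
  have hmono : 𝓝[>] (0:ℝ) ≤ 𝓝[≠] (0:ℝ) :=
    nhdsWithin_mono 0 (fun x hx => ne_of_gt hx)
  have tg : Filter.Tendsto (slope g 0) (𝓝[>] 0) (𝓝 Dg) :=
    (hasDerivAt_iff_tendsto_slope.mp hg).mono_left hmono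
  have th : Filter.Tendsto (slope h 0) (𝓝[>] 0) (𝓝 Dh) :=
    (hasDerivAt_iff_tendsto_slope.mp hh).mono_left hmono
  refine le_of_tendsto_of_tendsto th tg ?_
  filter_upwards [Ioo_mem_nhdsGT_of_mem (Set.left_mem_Ico.mpr hε)] with k hk
  have hk0 : 0 < k := hk.1
  simp only [slope_def_field, sub_zero]
  have := hle k hk0 hk.2
  exact div_le_div_of_nonneg_right this hk0.le

lemma single_shift_mem (a : E n) (ha : inBox ub a) (i : Fin n) (k : ℝ)
    (hk : 0 ≤ k) (hki : a i + k ≤ ub i) :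
    inBox ub (a + k • EuclideanSpace.single i (1:ℝ)) := by
  intro j
  by_cases hji : j = i
  · subst hji
    have : (a + k • EuclideanSpace.single j (1:ℝ)) j = a j + k := by
      simp [EuclideanSpace.single_apply]
    rw [this]
    exact ⟨by linarith [(ha j).1], hki⟩
  · have : (a + k • EuclideanSpace.single i (1:ℝ)) j = a j := by
      simp [EuclideanSpace.single_apply, hji]
    rw [this]
    exact ha j

lemma grad_anti_interior (hDR : DRSubmodular ub f)
    (hdiff : ∀ w, inBox ub w → DifferentiableAt ℝ f w)
    (a b : E n) (ha : inBox ub a) (hb : inBox ub b) (hab : ∀ i, a i ≤ b i)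
    (i : Fin n) (hbi : b i < ub i) : gradient f b i ≤ gradient f a i := by
  set e := EuclideanSpace.single i (1:ℝ) with he
  have ha0 : a + (0:ℝ) • e = a := by simp
  have hb0 : b + (0:ℝ) • e = b := by simp
  have hga : HasDerivAt (fun s : ℝ => f (a + s • e)) ⟪gradient f a, e⟫ 0 := by
    have := hd_line a e 0 (by rw [ha0]; exact hdiff a ha)
    rwa [ha0] at this
  have hgb : HasDerivAt (fun s : ℝ => f (b + s • e)) ⟪gradient f b, e⟫ 0 := by
    have := hd_line b e 0 (by rw [hb0]; exact hdiff b hb)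
    rwa [hb0] at this
  have key : ⟪gradient f b, e⟫ ≤ ⟪gradient f a, e⟫ := by
    refine deriv_le_of_incr hga hgb (ub i - b i) (by linarith) ?_
    intro k hk0 hkε
    have hmb : inBox ub (b + k • e) := single_shift_mem b hb i k hk0.le (by linarith)
    have hma : inBox ub (a + k • e) := single_shift_mem a ha i k hk0.le
      (by have := hab i; linarith)
    have := hDR a b ha hb hab i k hk0.le hma hmb
    simp only [ha0, hb0] at *
    linarith [this]
  rw [he, EuclideanSpace.inner_single_right, EuclideanSpace.inner_single_right] at key
  simpa using key


lemma scal_mem (hub : ∀ i, 0 < ub i) (a : E n) (ha : inBox ub a) {θ : ℝ}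
    (h0 : 0 ≤ θ) (h1 : θ ≤ 1) : inBox ub (θ • a) := by
  intro j
  have : (θ • a) j = θ * a j := rfl
  rw [this]
  obtain ⟨hj1, hj2⟩ := ha j
  constructor
  · positivity
  · nlinarith [hub j]

lemma grad_anti (hub : ∀ i, 0 < ub i) (hDR : DRSubmodular ub f)
    (hdiff : ∀ w, inBox ub w → DifferentiableAt ℝ f w)
    (hLip : ∀ a b, inBox ub a → inBox ub b →
      ‖gradient f a - gradient f b‖ ≤ L * ‖a - b‖)
    (a b : E n) (ha : inBox ub a) (hb : inBox ub b) (hab : ∀ i, a i ≤ b i)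
    (i : Fin n) : gradient f b i ≤ gradient f a i := by
  have hθ0 : ∀ m : ℕ, 0 ≤ 1 - 1/((m:ℝ)+1) := by
    intro m
    have h1 : (1:ℝ)/(m+1) ≤ 1 := by
      rw [div_le_one (by positivity)]; push_cast; linarith
    linarith
  have hθ1 : ∀ m : ℕ, 1 - 1/((m:ℝ)+1) < 1 := by
    intro m
    have : (0:ℝ) < 1/(m+1) := by positivity
    linarith
  have hlim : ∀ c : E n, inBox ub c →
      Filter.Tendsto (fun m : ℕ => gradient f ((1 - 1/((m:ℝ)+1)) • c) i) atTop
        (𝓝 (gradient f c i)) := by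
    intro c hc
    rw [tendsto_iff_dist_tendsto_zero]
    have hbnd : ∀ m : ℕ, dist (gradient f ((1 - 1/((m:ℝ)+1)) • c) i) (gradient f c i)
        ≤ |L| * (1/((m:ℝ)+1)) * ‖c‖ := by
      intro m
      have hmem := scal_mem hub c hc (hθ0 m) (hθ1 m).le
      have h1 : dist (gradient f ((1 - 1/((m:ℝ)+1)) • c) i) (gradient f c i)
          = |(gradient f ((1 - 1/((m:ℝ)+1)) • c) - gradient f c) i| := by
        rw [Real.dist_eq]; rfl
      have hnrm : ‖(1 - 1/((m:ℝ)+1)) • c - c‖ = (1/((m:ℝ)+1)) * ‖c‖ := by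
        have h2 : (1 - 1/((m:ℝ)+1)) • c - c = (-(1/((m:ℝ)+1))) • c := by module
        rw [h2, norm_smul, Real.norm_eq_abs, abs_neg, abs_of_nonneg (by positivity)]
      rw [h1]
      calc |(gradient f ((1 - 1/((m:ℝ)+1)) • c) - gradient f c) i|
          ≤ ‖gradient f ((1 - 1/((m:ℝ)+1)) • c) - gradient f c‖ := abs_apply_le _ i
        _ ≤ L * ‖(1 - 1/((m:ℝ)+1)) • c - c‖ := hLip _ _ hmem hc
        _ ≤ |L| * ‖(1 - 1/((m:ℝ)+1)) • c - c‖ := by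
            have := norm_nonneg ((1 - 1/((m:ℝ)+1)) • c - c)
            nlinarith [le_abs_self L]
        _ = |L| * (1/((m:ℝ)+1)) * ‖c‖ := by rw [hnrm]; ring
    refine squeeze_zero (fun m => dist_nonneg) hbnd ?_
    have h3 : Filter.Tendsto (fun m : ℕ => (1:ℝ)/(m+1)) atTop (𝓝 0) :=
      tendsto_one_div_add_atTop_nhds_zero_nat
    have h2 := (h3.const_mul |L|).mul_const ‖c‖
    simpa [mul_assoc] using h2
  refine le_of_tendsto_of_tendsto (hlim b hb) (hlim a ha)
    (Filter.Eventually.of_forall fun m => ?_)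
  have hmema := scal_mem hub a ha (hθ0 m) (hθ1 m).le
  have hmemb := scal_mem hub b hb (hθ0 m) (hθ1 m).le
  refine grad_anti_interior hDR hdiff _ _ hmema hmemb (fun j => ?_) i ?_
  · show (1 - 1/((m:ℝ)+1)) * a j ≤ (1 - 1/((m:ℝ)+1)) * b j
    exact mul_le_mul_of_nonneg_left (hab j) (hθ0 m)
  · show (1 - 1/((m:ℝ)+1)) * b i < ub i
    nlinarith [hub i, (hb i).2, hθ0 m, hθ1 m]

lemma inner_grad_anti (hub : ∀ i, 0 < ub i) (hDR : DRSubmodular ub f)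
    (hdiff : ∀ w, inBox ub w → DifferentiableAt ℝ f w)
    (hLip : ∀ a b, inBox ub a → inBox ub b →
      ‖gradient f a - gradient f b‖ ≤ L * ‖a - b‖)
    (a b d : E n) (ha : inBox ub a) (hb : inBox ub b) (hab : ∀ i, a i ≤ b i)
    (hd : ∀ i, 0 ≤ d i) : ⟪gradient f b, d⟫ ≤ ⟪gradient f a, d⟫ := by
  simp only [PiLp.inner_apply, RCLike.inner_apply, conj_trivial]
  refine Finset.sum_le_sum fun j _ => ?_
  exact mul_le_mul_of_nonneg_left (grad_anti hub hDR hdiff hLip a b ha hb hab j) (hd j)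

lemma seg_mem (w d : E n) (hw : inBox ub w) (hd : ∀ i, 0 ≤ d i) (T : ℝ)
    (hT : inBox ub (w + T • d)) (s : ℝ) (hs0 : 0 ≤ s) (hsT : s ≤ T) :
    inBox ub (w + s • d) := by
  intro j
  have h1 : (w + s • d) j = w j + s * d j := rfl
  have h2 : (w + T • d) j = w j + T * d j := rfl
  rw [h1]
  obtain ⟨hw1, hw2⟩ := hw j
  obtain ⟨hT1, hT2⟩ := hT j
  rw [h2] at hT2
  constructor
  · nlinarith [hd j]
  · nlinarith [hd j]

lemma cont_line (w d : E n) (hd : ∀ i, 0 ≤ d i)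
    (hdiff : ∀ z, inBox ub z → DifferentiableAt ℝ f z)
    (hw : inBox ub w) (T : ℝ) (hT0 : 0 ≤ T) (hT : inBox ub (w + T • d)) :
    ∀ s ∈ Set.Icc 0 T,
      HasDerivAt (fun t : ℝ => f (w + t • d)) ⟪gradient f (w + s • d), d⟫ s :=
  fun s hs => hd_line w d s (hdiff _ (seg_mem w d hw hd T hT s hs.1 hs.2))

/-- linearization upper bound along a nonnegative direction -/
lemma linearize (hub : ∀ i, 0 < ub i) (hDR : DRSubmodular ub f)
    (hdiff : ∀ z, inBox ub z → DifferentiableAt ℝ f z)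
    (hLip : ∀ a b, inBox ub a → inBox ub b →
      ‖gradient f a - gradient f b‖ ≤ L * ‖a - b‖)
    (w d : E n) (hw : inBox ub w) (hd : ∀ i, 0 ≤ d i)
    (hwd : inBox ub (w + d)) :
    f (w + d) ≤ f w + ⟪gradient f w, d⟫ := by
  have hT : inBox ub (w + (1:ℝ) • d) := by rwa [one_smul]
  have hder := cont_line w d hd hdiff hw 1 zero_le_one hT
  obtain ⟨c, hc, hceq⟩ := exists_hasDerivAt_eq_slope (fun t : ℝ => f (w + t • d))
    (fun s => ⟪gradient f (w + s • d), d⟫) zero_lt_one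
    (fun s hs => ((hder s hs).continuousAt).continuousWithinAt)
    (fun s hs => hder s ⟨hs.1.le, hs.2.le⟩)
  have hmem := seg_mem w d hw hd 1 hT c hc.1.le hc.2.le
  have hle : ⟪gradient f (w + c • d), d⟫ ≤ ⟪gradient f w, d⟫ := by
    refine inner_grad_anti hub hDR hdiff hLip w (w + c • d) d hw hmem (fun j => ?_) hd
    have h1 : (w + c • d) j = w j + c * d j := rfl
    rw [h1]; nlinarith [hd j, hc.1.le]
  rw [show f (w + (1:ℝ) • d) = f (w + d) by rw [one_smul],
    show w + (0:ℝ) • d = w by rw [zero_smul, add_zero]] at hceq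
  have : f (w + d) - f w = ⟪gradient f (w + c • d), d⟫ := by
    rw [hceq]; ring
  linarith

/-- the `(1-θ)` lemma -/
lemma ratio_lemma (hub : ∀ i, 0 < ub i) (hDR : DRSubmodular ub f)
    (hdiff : ∀ z, inBox ub z → DifferentiableAt ℝ f z)
    (hLip : ∀ a b, inBox ub a → inBox ub b →
      ‖gradient f a - gradient f b‖ ≤ L * ‖a - b‖)
    (hnn : ∀ z, inBox ub z → 0 ≤ f z)
    (y d : E n) (hy : inBox ub y) (hd : ∀ i, 0 ≤ d i)
    (θ : ℝ) (hθ0 : 0 < θ) (hθ1 : θ < 1)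
    (hp : inBox ub (y + θ⁻¹ • d)) :
    (1 - θ) * f y ≤ f (y + d) := by
  have hinv1 : 1 < θ⁻¹ := (one_lt_inv₀ hθ0).mpr hθ1
  have hz : inBox ub (y + (1:ℝ) • d) := seg_mem y d hy hd θ⁻¹ hp 1 zero_le_one hinv1.le
  have hder := cont_line y d hd hdiff hy θ⁻¹ (by positivity) hp
  -- MVT on [0,1]
  obtain ⟨c₁, hc₁, heq₁⟩ := exists_hasDerivAt_eq_slope (fun t : ℝ => f (y + t • d))
    (fun s => ⟪gradient f (y + s • d), d⟫) zero_lt_one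
    (fun s hs => ((hder s ⟨hs.1, hs.2.trans hinv1.le⟩).continuousAt).continuousWithinAt)
    (fun s hs => hder s ⟨hs.1.le, hs.2.le.trans hinv1.le⟩)
  -- MVT on [1, θ⁻¹]
  obtain ⟨c₂, hc₂, heq₂⟩ := exists_hasDerivAt_eq_slope (fun t : ℝ => f (y + t • d))
    (fun s => ⟪gradient f (y + s • d), d⟫) hinv1
    (fun s hs => ((hder s ⟨zero_le_one.trans hs.1, hs.2⟩).continuousAt).continuousWithinAt)
    (fun s hs => hder s ⟨(zero_le_one.trans hs.1.le), hs.2.le⟩)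
  have hc₁m := seg_mem y d hy hd θ⁻¹ hp c₁ hc₁.1.le (hc₁.2.le.trans hinv1.le)
  have hc₂m := seg_mem y d hy hd θ⁻¹ hp c₂ (zero_le_one.trans hc₂.1.le) hc₂.2.le
  have hcc : ⟪gradient f (y + c₂ • d), d⟫ ≤ ⟪gradient f (y + c₁ • d), d⟫ := by
    refine inner_grad_anti hub hDR hdiff hLip _ _ d hc₁m hc₂m (fun j => ?_) hd
    have h1 : (y + c₁ • d) j = y j + c₁ * d j := rfl
    have h2 : (y + c₂ • d) j = y j + c₂ * d j := rfl
    rw [h1, h2]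
    nlinarith [hd j, hc₁.2.le, hc₂.1.le]
  have hfy : f (y + (0:ℝ) • d) = f y := by rw [zero_smul, add_zero]
  have hfp : 0 ≤ f (y + θ⁻¹ • d) := hnn _ hp
  rw [hfy] at heq₁
  set A := f (y + (1:ℝ) • d) with hA
  have heq₁' : ⟪gradient f (y + c₁ • d), d⟫ = A - f y := by rw [heq₁]; ring
  have heq₂' : ⟪gradient f (y + c₂ • d), d⟫ * (θ⁻¹ - 1) = f (y + θ⁻¹ • d) - A := by
    rw [heq₂, div_mul_cancel₀ _ (ne_of_gt (by linarith : (0:ℝ) < θ⁻¹ - 1))]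
  have hgoal : (1 - θ) * f y ≤ A := by
    have h5 : (A - f y) * (θ⁻¹ - 1) ≥ f (y + θ⁻¹ • d) - A := by
      rw [← heq₂', ← heq₁']
      nlinarith [hcc, hinv1]
    have hTpos : (0:ℝ) < θ⁻¹ := inv_pos.mpr hθ0
    by_contra hcon
    push_neg at hcon
    have h8 : θ⁻¹ * A < θ⁻¹ * ((1 - θ) * f y) := mul_lt_mul_of_pos_left hcon hTpos
    have e1 : θ⁻¹ * (1 - θ) = θ⁻¹ - 1 := by
      rw [mul_sub, mul_one, inv_mul_cancel₀ (ne_of_gt hθ0)]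
    rw [← mul_assoc, e1] at h8
    have h9 := h5
    ring_nf at h9 h8
    linarith [hfp, h9, h8]
  rwa [show y + d = y + (1:ℝ) • d by rw [one_smul]]

/-- descent lemma (smoothness) -/
lemma descent (hdiff : ∀ z, inBox ub z → DifferentiableAt ℝ f z)
    (hLip : ∀ a b, inBox ub a → inBox ub b →
      ‖gradient f a - gradient f b‖ ≤ L * ‖a - b‖)
    (w u : E n) (hw : inBox ub w) (hu : ∀ i, 0 ≤ u i)
    (hwu : inBox ub (w + u)) :
    f w + ⟪gradient f w, u⟫ - L * ‖u‖^2 / 2 ≤ f (w + u) := by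
  have hT : inBox ub (w + (1:ℝ) • u) := by rwa [one_smul]
  have hder := cont_line w u hu hdiff hw 1 zero_le_one hT
  set C := (⟪gradient f w, u⟫ : ℝ) with hC
  set φ : ℝ → ℝ := fun t => f (w + t • u) - t * C + (L * ‖u‖^2 / 2) * t^2 with hφ
  have hφder : ∀ s ∈ Set.Icc (0:ℝ) 1, HasDerivAt φ
      (⟪gradient f (w + s • u), u⟫ - C + (L * ‖u‖^2 / 2) * (2 * s)) s := by
    intro s hs
    have h1 := hder s hs
    have h2 : HasDerivAt (fun t : ℝ => t * C) C s := by
      simpa using (hasDerivAt_id s).mul_const C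
    have h3 : HasDerivAt (fun t : ℝ => (L * ‖u‖^2 / 2) * t^2)
        ((L * ‖u‖^2 / 2) * (2 * s)) s := by
      have := (hasDerivAt_pow 2 s).const_mul (L * ‖u‖^2 / 2)
      simpa [pow_one, mul_comm, mul_assoc, mul_left_comm] using this
    exact (h1.sub h2).add h3
  have hnonneg : ∀ s ∈ Set.Ioo (0:ℝ) 1,
      0 ≤ ⟪gradient f (w + s • u), u⟫ - C + (L * ‖u‖^2 / 2) * (2 * s) := by
    intro s hs
    have hmem := seg_mem w u hw hu 1 hT s hs.1.le hs.2.le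
    have hdiffinner : C - ⟪gradient f (w + s • u), u⟫
        = ⟪gradient f w - gradient f (w + s • u), u⟫ := by
      rw [hC, inner_sub_left]
    have hcs : ⟪gradient f w - gradient f (w + s • u), u⟫
        ≤ ‖gradient f w - gradient f (w + s • u)‖ * ‖u‖ :=
      real_inner_le_norm _ _
    have hlip2 : ‖gradient f w - gradient f (w + s • u)‖ ≤ L * (s * ‖u‖) := by
      have := hLip w (w + s • u) hw hmem
      rwa [show w - (w + s • u) = (-s) • u by module, norm_smul, Real.norm_eq_abs,
        abs_neg, abs_of_nonneg hs.1.le] at this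
    nlinarith [norm_nonneg u, hs.1.le]
  obtain ⟨c, hc, hceq⟩ := exists_hasDerivAt_eq_slope φ
    (fun s => ⟪gradient f (w + s • u), u⟫ - C + (L * ‖u‖^2 / 2) * (2 * s)) zero_lt_one
    (fun s hs => ((hφder s hs).continuousAt).continuousWithinAt)
    (fun s hs => hφder s ⟨hs.1.le, hs.2.le⟩)
  have h0le : 0 ≤ (φ 1 - φ 0) / (1 - 0) := by
    rw [← hceq]; exact hnonneg c hc
  have hφ1 : φ 1 = f (w + u) - C + L * ‖u‖^2 / 2 := by
    simp only [hφ, one_smul, one_pow, mul_one, one_mul]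
  have hφ0 : φ 0 = f w := by
    simp only [hφ]; rw [zero_smul, add_zero]; ring_nf
  rw [hφ1, hφ0] at h0le
  have : 0 ≤ f (w + u) - C + L * ‖u‖^2 / 2 - f w := by
    have h6 : (0:ℝ) < 1 - 0 := by norm_num
    by_contra hcon
    push_neg at hcon
    have : (f (w + u) - C + L * ‖u‖^2 / 2 - f w) / (1 - 0) < 0 := by
      apply div_neg_of_neg_of_pos hcon h6
    linarith
  linarith

end helpers


set_option maxHeartbeats 1600000 in
/-- Corollary 1 (the `1/e` approximation guarantee of the non-monotone Frank-Wolfe variant,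
with the `O(1/K²)·f(x*)` term made explicit), run with uniform step size `γ = 1/K`. -/
theorem stmt9 {n : ℕ} (hn : 1 ≤ n) (ub : E n) (hub : ∀ i, 0 < ub i)
    (P : Set (E n)) (hPX : ∀ p ∈ P, inBox ub p) (hPne : P.Nonempty)
    (hPcp : IsCompact P) (hPcv : Convex ℝ P) (hPdc : DownClosed P)
    (D : ℝ) (hD : ∀ a ∈ P, ∀ b ∈ P, ‖a - b‖ ≤ D)
    (f : E n → ℝ) (L : ℝ)
    (hnn : ∀ w, inBox ub w → 0 ≤ f w)
    (hDR : DRSubmodular ub f)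
    (hdiff : ∀ w, inBox ub w → DifferentiableAt ℝ f w)
    (hLip : ∀ a b, inBox ub a → inBox ub b →
      ‖gradient f a - gradient f b‖ ≤ L * ‖a - b‖)
    (xs : E n) (hxs : xs ∈ P) (hmax : ∀ w ∈ P, f w ≤ f xs)
    (K : ℕ) (hK : 2 ≤ K)
    (x v : ℕ → E n)
    (h0 : x 0 = 0)
    (hrec : ∀ k, x (k + 1) = x k + (1 / (K : ℝ)) • v k)
    (hvfeas : ∀ k, v k ∈ P ∧ ∀ i, v k i ≤ ub i - x k i)
    (hvopt : ∀ k, ∀ w ∈ P, (∀ i, w i ≤ ub i - x k i) →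
      ⟪w, gradient f (x k)⟫ ≤ ⟪v k, gradient f (x k)⟫) :
    f (x K) ≥ Real.exp (-1) * f xs - (L * D ^ 2 / 2 + f xs) / (K : ℝ) := by
  have hK2 : (2:ℝ) ≤ (K:ℝ) := by exact_mod_cast hK
  have hKpos : (0:ℝ) < (K:ℝ) := by linarith
  set γ : ℝ := 1/(K:ℝ) with hγ
  have hγpos : 0 < γ := by rw [hγ]; positivity
  have hγhalf : γ ≤ 1/2 := by
    rw [hγ, div_le_div_iff₀ hKpos (by norm_num)]; linarith
  have hone_sub : 0 < 1 - γ := by linarith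
  set F : ℝ := f xs with hF
  set C : ℝ := L * D^2 / 2 with hCdef
  -- zero is feasible
  have h0box : inBox ub (0 : E n) := fun i => ⟨le_refl _, (hub i).le⟩
  have h0P : (0 : E n) ∈ P := by
    obtain ⟨p, hp⟩ := hPne
    exact hPdc p hp 0 (fun i => le_refl _) (fun i => (hPX p hp i).1)
  have hFnn : 0 ≤ F := hnn xs (hPX xs hxs)
  have hDnn : 0 ≤ D := le_trans (norm_nonneg (xs - xs)) (hD xs hxs xs hxs)
  have hLnn : 0 ≤ L := by
    have hubbox : inBox ub ub := fun i => ⟨(hub i).le, le_refl _⟩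
    have h1 := hLip 0 ub h0box hubbox
    have h2 : (0:ℝ) < ‖(0:E n) - ub‖ := by
      rw [zero_sub, norm_neg]
      refine norm_pos_iff.mpr ?_
      intro hc
      have h5 := hub ⟨0, by omega⟩
      rw [hc] at h5
      have h6 : ((0:E n) ⟨0, by omega⟩ : ℝ) = 0 := rfl
      rw [h6] at h5
      exact lt_irrefl 0 h5
    nlinarith [norm_nonneg (gradient f 0 - gradient f ub)]
  have hCnn : 0 ≤ C := by rw [hCdef]; positivity
  have hvP : ∀ k, v k ∈ P := fun k => (hvfeas k).1
  have hvnn : ∀ k i, 0 ≤ v k i := fun k i => (hPX _ (hvP k) i).1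
  have hvD : ∀ k, ‖v k‖ ≤ D := fun k => by
    have := hD (v k) (hvP k) 0 h0P
    rwa [sub_zero] at this
  -- bounds on the iterates
  have hxbound : ∀ k, ∀ i, 0 ≤ x k i ∧ x k i ≤ (1 - (1-γ)^k) * ub i := by
    intro k
    induction k with
    | zero =>
      intro i
      rw [h0]
      constructor
      · exact le_refl _
      · simp
    | succ k ih =>
      intro i
      have hx1 : x (k+1) i = x k i + γ * v k i := by rw [hrec k]; rfl
      obtain ⟨ih1, ih2⟩ := ih i
      have hv2 := (hvfeas k).2 i
      have hpow : (0:ℝ) ≤ (1-γ)^k := pow_nonneg hone_sub.le k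
      have e : (1 - (1-γ)^(k+1)) * ub i = (1-γ)*((1 - (1-γ)^k) * ub i) + γ * ub i := by
        rw [pow_succ]; ring
      constructor
      · rw [hx1]; nlinarith [hvnn k i, hγpos.le]
      · rw [hx1, e]
        have m1 : γ * v k i ≤ γ * (ub i - x k i) :=
          mul_le_mul_of_nonneg_left hv2 hγpos.le
        have m2 : (1-γ) * (x k i) ≤ (1-γ) * ((1 - (1-γ)^k) * ub i) :=
          mul_le_mul_of_nonneg_left ih2 hone_sub.le
        nlinarith [m1, m2]
  have hxbox : ∀ k, inBox ub (x k) := by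
    intro k i
    obtain ⟨h1, h2⟩ := hxbound k i
    have hpow : (0:ℝ) ≤ (1-γ)^k := pow_nonneg hone_sub.le k
    exact ⟨h1, h2.trans (by nlinarith [hub i])⟩
  -- the one-step inequality
  have hstep : ∀ k, (1-γ) * f (x k) + γ * (1-γ)^k * F - γ^2 * C ≤ f (x (k+1)) := by
    intro k
    set vb : E n := (WithLp.equiv 2 (Fin n → ℝ)).symm
      (fun i => max (xs i) (x k i) - x k i) with hvb
    have hvbi : ∀ i, vb i = max (xs i) (x k i) - x k i := fun i => rfl
    have hxsP := hPX xs hxs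
    have hvbnn : ∀ i, 0 ≤ vb i := fun i => by
      rw [hvbi]; simp [le_max_right]
    have hvbP : vb ∈ P := by
      refine hPdc xs hxs vb hvbnn (fun i => ?_)
      rw [hvbi]
      rcases le_total (xs i) (x k i) with h | h
      · rw [max_eq_right h]; linarith [(hxsP i).1]
      · rw [max_eq_left h]; linarith [(hxbox k i).1]
    have hvbub : ∀ i, vb i ≤ ub i - x k i := fun i => by
      rw [hvbi]
      have := max_le (hxsP i).2 (hxbox k i).2
      linarith
    have hopt := hvopt k vb hvbP hvbub
    have hzeq : ∀ i, (x k + vb) i = max (xs i) (x k i) := by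
      intro i
      have h1 : (x k + vb) i = x k i + vb i := rfl
      rw [h1, hvbi]; ring
    have hzbox : inBox ub (x k + vb) := by
      intro i
      rw [hzeq i]
      exact ⟨le_trans (hxsP i).1 (le_max_left _ _), max_le (hxsP i).2 (hxbox k i).2⟩
    have hlin := linearize hub hDR hdiff hLip (x k) vb (hxbox k) hvbnn hzbox
    -- the ratio bound
    have hratio : (1-γ)^k * F ≤ f (x k + vb) := by
      rcases Nat.eq_zero_or_pos k with hk0 | hk1
      · subst hk0
        have hxz : x 0 + vb = xs := by
          ext i
          rw [hzeq i, h0]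
          have : (0:E n) i = 0 := rfl
          rw [this, max_eq_left (hxsP i).1]
        rw [hxz, pow_zero, one_mul]
      · set θ : ℝ := 1 - (1-γ)^k with hθdef
        have hθpos : 0 < θ := by
          rw [hθdef]
          have := pow_lt_one₀ hone_sub.le (by linarith) (by omega : k ≠ 0)
          linarith
        have hθlt : θ < 1 := by
          rw [hθdef]
          have := pow_pos hone_sub k
          linarith
        set d : E n := x k + vb - xs with hd
        have hdi : ∀ i, d i = max (xs i) (x k i) - xs i := by
          intro i
          have h1 : d i = (x k + vb) i - xs i := rfl
          rw [h1, hzeq i]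
        have hdnn : ∀ i, 0 ≤ d i := fun i => by
          rw [hdi]; simp [le_max_left]
        have hp : inBox ub (xs + θ⁻¹ • d) := by
          intro i
          have h1 : (xs + θ⁻¹ • d) i = xs i + θ⁻¹ * d i := rfl
          rw [h1, hdi]
          have hinvpos : (0:ℝ) < θ⁻¹ := inv_pos.mpr hθpos
          rcases le_total (x k i) (xs i) with h | h
          · rw [max_eq_left h]
            simp only [sub_self, mul_zero, add_zero]
            exact hxsP i
          · rw [max_eq_right h]
            have hxk : x k i ≤ θ * ub i := by
              have := (hxbound k i).2
              rw [hθdef]; linarith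
            constructor
            · nlinarith [(hxsP i).1, hinvpos.le, h]
            · have hA : θ⁻¹ * (x k i - xs i) ≤ θ⁻¹ * (θ * ub i - xs i) :=
                mul_le_mul_of_nonneg_left (by linarith) hinvpos.le
              have hB : θ⁻¹ * (θ * ub i - xs i) = ub i - θ⁻¹ * xs i := by
                rw [mul_sub, ← mul_assoc, inv_mul_cancel₀ hθpos.ne', one_mul]
              have hinv1 : (1:ℝ) ≤ θ⁻¹ := (one_le_inv₀ hθpos).mpr hθlt.le
              have hC2 : xs i ≤ θ⁻¹ * xs i := by
                nlinarith [(hxsP i).1]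
              linarith [hA, hB.le, hB.ge]
        have hrl := ratio_lemma hub hDR hdiff hLip hnn xs d (hxsP) hdnn θ hθpos hθlt hp
        have hxd : xs + d = x k + vb := by rw [hd]; abel
        rw [hxd] at hrl
        have : (1:ℝ) - θ = (1-γ)^k := by rw [hθdef]; ring
        rw [← this]
        exact hrl
    -- descent step
    have husm : ∀ i, 0 ≤ (γ • v k) i := by
      intro i
      have h1 : (γ • v k) i = γ * v k i := rfl
      rw [h1]
      exact mul_nonneg hγpos.le (hvnn k i)
    have hwu : inBox ub (x k + γ • v k) := by
      have h7 := hxbox (k+1)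
      rwa [hrec k] at h7
    have hdes := descent hdiff hLip (x k) (γ • v k) (hxbox k) husm hwu
    have hxk1 : x (k+1) = x k + γ • v k := by rw [hrec k]
    rw [← hxk1] at hdes
    have hsm : ⟪gradient f (x k), γ • v k⟫ = γ * ⟪gradient f (x k), v k⟫ :=
      real_inner_smul_right _ _ _
    have hnormsq : L * ‖γ • v k‖^2 / 2 ≤ γ^2 * C := by
      have h1 : ‖γ • v k‖ = γ * ‖v k‖ := by
        rw [norm_smul, Real.norm_eq_abs, abs_of_nonneg hγpos.le]
      rw [h1, hCdef]
      have h2 := hvD k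
      have h3 := norm_nonneg (v k)
      have h4 : 0 ≤ L * (D*D - ‖v k‖*‖v k‖) :=
        mul_nonneg hLnn (by nlinarith [mul_self_le_mul_self h3 h2])
      nlinarith [mul_nonneg (sq_nonneg γ) h4]
    -- combine
    have hchain : (1-γ)^k * F - f (x k) ≤ ⟪gradient f (x k), v k⟫ := by
      have e1 : ⟪gradient f (x k), vb⟫ = ⟪vb, gradient f (x k)⟫ := real_inner_comm _ _
      have e2 : ⟪gradient f (x k), v k⟫ = ⟪v k, gradient f (x k)⟫ := real_inner_comm _ _
      rw [e2]
      calc (1-γ)^k * F - f (x k) ≤ f (x k + vb) - f (x k) := by linarith [hratio]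
        _ ≤ ⟪gradient f (x k), vb⟫ := by linarith [hlin]
        _ = ⟪vb, gradient f (x k)⟫ := e1
        _ ≤ ⟪v k, gradient f (x k)⟫ := hopt
    have hmul := mul_le_mul_of_nonneg_left hchain hγpos.le
    rw [hsm] at hdes
    nlinarith [hdes, hmul, hnormsq]
  -- induction
  have hmain : ∀ k : ℕ, (k:ℝ) * γ * (1-γ)^(k-1) * F - (k:ℝ) * γ^2 * C ≤ f (x k) := by
    intro k
    induction k with
    | zero =>
      simp only [Nat.cast_zero, zero_mul, sub_zero]
      rw [h0]
      have := hnn 0 h0box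
      linarith
    | succ k ih =>
      have hs := hstep k
      rcases Nat.eq_zero_or_pos k with hk0 | hk1
      · subst hk0
        rw [h0] at hs
        have h00 : 0 ≤ f (0:E n) := hnn 0 h0box
        simp only [Nat.cast_one, pow_zero, Nat.zero_add] at hs ⊢
        norm_num at hs ⊢
        nlinarith [hs, h00, hone_sub]
      · have hkk : k - 1 + 1 = k := Nat.succ_pred_eq_of_pos hk1
        have hpw : (1-γ)^k = (1-γ)^(k-1) * (1-γ) := by rw [← pow_succ, hkk]
        have hsucc : (k+1) - 1 = k := rfl
        rw [hsucc]
        have hmm := mul_le_mul_of_nonneg_left ih hone_sub.le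
        have e1 : (1-γ)*((k:ℝ)*γ*(1-γ)^(k-1)*F) = (k:ℝ)*γ*(1-γ)^k*F := by
          rw [hpw]; ring
        have hBnn : 0 ≤ (k:ℝ)*γ^2*C := by positivity
        have e2 : (1-γ)*((k:ℝ)*γ^2*C) ≤ (k:ℝ)*γ^2*C := by nlinarith [hBnn, hγpos]
        push_cast
        nlinarith [hmm, hs, e1, e2]
  -- the exponential bound
  have h9 : K - 1 + 1 = K := by omega
  have hmK : ((K-1:ℕ):ℝ) + 1 = (K:ℝ) := by exact_mod_cast congrArg (Nat.cast (R:=ℝ)) h9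
  have hmpos : (0:ℝ) < ((K-1:ℕ):ℝ) := by exact_mod_cast (by omega : 0 < K - 1)
  have hexp : Real.exp (-1) ≤ (1-γ)^(K-1) := by
    have h1 : 1 + 1/((K-1:ℕ):ℝ) ≤ Real.exp (1/((K-1:ℕ):ℝ)) := by
      have := Real.add_one_le_exp (1/((K-1:ℕ):ℝ)); linarith
    have h2 : (1 + 1/((K-1:ℕ):ℝ))^(K-1) ≤ (Real.exp (1/((K-1:ℕ):ℝ)))^(K-1) :=
      pow_le_pow_left₀ (by positivity) h1 (K-1)
    have h3 : (Real.exp (1/((K-1:ℕ):ℝ)))^(K-1) = Real.exp 1 := by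
      rw [← Real.exp_nat_mul, mul_one_div, div_self hmpos.ne']
    have hbase : (1 - γ) = (1 + 1/((K-1:ℕ):ℝ))⁻¹ := by
      have e0 : ((K-1:ℕ):ℝ) = (K:ℝ) - 1 := by linarith [hmK]
      have h11 : (K:ℝ) - 1 ≠ 0 := by linarith
      have h15 : (1:ℝ) + 1/((K:ℝ)-1) = (K:ℝ)/((K:ℝ)-1) := by field_simp; ring
      rw [hγ, e0, h15, inv_div]
      have hK0 : (K:ℝ) ≠ 0 := hKpos.ne'
      field_simp
    rw [hbase, inv_pow, Real.exp_neg]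
    have hpos : (0:ℝ) < (1 + 1/((K-1:ℕ):ℝ))^(K-1) := by positivity
    exact inv_anti₀ hpos (h3 ▸ h2)
  have hfinal := hmain K
  have hKγ : (K:ℝ) * γ = 1 := by rw [hγ]; field_simp
  have hKγ2 : (K:ℝ) * γ^2 = γ := by rw [hγ]; field_simp
  have hfin2 : (1-γ)^(K-1) * F - γ * C ≤ f (x K) := by
    have e : (K:ℝ) * γ * (1-γ)^(K-1) * F - (K:ℝ) * γ^2 * C = (1-γ)^(K-1) * F - γ * C := by
      linear_combination ((1-γ)^(K-1) * F) * hKγ - C * hKγ2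
    linarith [hfinal, e.le, e.ge]
  have hexpF : Real.exp (-1) * F ≤ (1-γ)^(K-1) * F :=
    mul_le_mul_of_nonneg_right hexp hFnn
  have hdiv : (C + F)/(K:ℝ) = γ*C + γ*F := by rw [hγ]; ring
  have hγF : 0 ≤ γ * F := mul_nonneg hγpos.le hFnn
  rw [ge_iff_le]
  calc Real.exp (-1) * F - (C + F)/(K:ℝ)
      = Real.exp (-1) * F - γ*C - γ*F := by rw [hdiv]; ring
    _ ≤ (1-γ)^(K-1) * F - γ*C := by linarith [hexpF, hγF]
    _ ≤ f (x K) := hfin2
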